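/- Let p be a prime, t ≥ 0, and write n = d_t p^t + e_t with d_t ≥ 1 and 0 ≤ e_t < p^t. Let α be a partition of n with α_1 > α_2 ≥ 1 such that h_{1,α_2}(α) > d_t p^t, (d_t−1)p^t < h_{1,α_2+1}(α) < d_t p^t, and h_{2,1}(α) < p^t. Then p divides the degree of χ^α. -/

import Mathlib

/-- A partition: a weakly decreasing list of positive integers. -/
def IsPartition (l : List ℕ) : Prop :=
  l.Pairwise (· ≥ ·) ∧ ∀ x ∈ l, 0 < x

/-- A partition of `n`. -/
def IsPartitionOf (n : ℕ) (l : List ℕ) : Prop :=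
  IsPartition l ∧ l.sum = n

/-- The β-set of the partition `l` consisting of `m` beta-numbers
(first-column hook lengths, padding `l` with zero parts up to length `m`). -/
def betaSetN (l : List ℕ) (m : ℕ) : Finset ℕ :=
  (Finset.range m).image (fun i => l.getD i 0 + (m - 1 - i))

/-- The canonical β-set of a partition. -/
def betaSet (l : List ℕ) : Finset ℕ := betaSetN l l.length

/-- The Murnaghan–Nakayama recursion, computing the character value of the
partition with β-set `B` on the cycle type given by the list.  Removing a
`k`-hook corresponds to replacing a beta-number `x` by `x - k`, with sign
`(-1)` to the number of beta-numbers strictly between `x - k` and `x`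
(the leg length of the hook). -/
def MN : List ℕ → Finset ℕ → ℤ
  | [], _ => 1
  | k :: μ, B =>
    ∑ x ∈ B.filter (fun x => k ≤ x ∧ x - k ∉ B),
      (-1) ^ (B.filter (fun y => x - k < y ∧ y < x)).card * MN μ (insert (x - k) (B.erase x))

/-- `charVal α μ` is the value `χ^α_μ` of the irreducible character of the
symmetric group labeled by the partition `α` on the class of cycle type `μ`. -/
def charVal (α μ : List ℕ) : ℤ := MN μ (betaSet α)

/-- The degree of the irreducible character labeled by `α`
(its value on the identity). -/
def charDegree (α : List ℕ) : ℤ := charVal α (List.replicate α.sum 1)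

/-- The `r`-weight of a partition: the number of `r`-hooks removed in passing
to the `r`-core, computed on the abacus. -/
def wt (r : ℕ) (α : List ℕ) : ℕ :=
  (∑ x ∈ betaSet α, x / r) -
    ∑ j ∈ Finset.range r, Nat.choose ((betaSet α).filter (fun x => x % r = j)).card 2

/-- The hook length `h_{i,j}(α)` of the node `(i,j)` (1-indexed). -/
def hookLen (α : List ℕ) (i j : ℕ) : ℤ :=
  (α.getD (i - 1) 0 : ℤ) + ((α.filter (fun a => j ≤ a)).length : ℤ) - i - j + 1

/-- `RemoveHook k α β`: the partition `β` is obtained from `α` by removing a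
single hook of length `k`. -/
def RemoveHook (k : ℕ) (α β : List ℕ) : Prop :=
  ∃ m, α.length ≤ m ∧ β.length ≤ m ∧ ∃ x ∈ betaSetN α m,
    k ≤ x ∧ x - k ∉ betaSetN α m ∧
    betaSetN β m = insert (x - k) ((betaSetN α m).erase x)

/-- `RemoveHooksSeq ks α β`: `β` is obtained from `α` by successively removing
hooks of lengths given, in order, by the list `ks`. -/
def RemoveHooksSeq : List ℕ → List ℕ → List ℕ → Prop
  | [], α, β => α = β
  | k :: ks, α, β => ∃ γ, IsPartition γ ∧ RemoveHook k α γ ∧ RemoveHooksSeq ks γ β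

/-- The partition `λ_{n,p} = ((p^k)^{a_k}, …, 1^{a_0})` where
`n = a_k p^k + … + a_0` is the `p`-adic expansion of `n`. -/
def padicType (p n : ℕ) : List ℕ :=
  ((List.range (Nat.digits p n).length).reverse).flatMap
    (fun i => List.replicate ((Nat.digits p n).getD i 0) (p ^ i))

/-- A cycle type `μ` of `S_n` is `p`-vanishing if every irreducible character
of `S_n` of degree divisible by `p` vanishes on the class of cycle type `μ`. -/
def PVanishing (p n : ℕ) (μ : List ℕ) : Prop :=
  ∀ α : List ℕ, IsPartitionOf n α → (p : ℤ) ∣ charDegree α → charVal α μ = 0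

/-
Let `B` be the β-set of `α` and `n = |α|`. Unwinding the Murnaghan–Nakayama recursion on
`1`-cycles, together with the Lagrange-interpolation identity
`∑ᵢ vᵢ ∏ⱼ (vᵢ - vⱼ - 1) / ∏_{j ≠ i} (vᵢ - vⱼ) = C(#B, 2) - ∑ᵢ vᵢ`, gives the hook length formula
in β-set form: `χ^α(1) ∏_{x ∈ B} x! = n! ∏_{y < x in B} (x - y)`.
By Legendre's formula, `v_p(χ^α(1))` is the sum over `k ≥ 1` of
`⌊n/pᵏ⌋ + #{y < x in B : pᵏ ∣ x - y} - ∑_{x ∈ B} ⌊x/pᵏ⌋`, and an abacus argument shows that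
each summand is nonnegative. Under the hook conditions the largest β-number `α₁ + ℓ - 1` lies in
`[d pᵗ, (d + 1) pᵗ)`, all other β-numbers are below `pᵗ`, and `α₁ + ℓ - 1 - d pᵗ` is again a
β-number (it belongs to a row of length `α₂`), so the summand for `k = t` is at least
`d + 1 - d = 1`.
-/

open Finset Polynomial
open scoped Nat

theorem choose_two_succ (m : ℕ) : (m + 1).choose 2 = m + m.choose 2 := by
  simpa using Nat.choose_succ_succ' m 1

theorem choose_two_card_le_sum (s : Finset ℕ) : (#s).choose 2 ≤ ∑ x ∈ s, x := by
  induction s using Finset.induction_on_max with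
  | empty => simp
  | insert a s hlt ih =>
    have hcard : #s ≤ a := by simpa using card_le_card fun x hx => mem_range.2 (hlt x hx)
    have ha : a ∉ s := fun h => lt_irrefl a (hlt a h)
    rw [card_insert_of_notMem ha, sum_insert ha, choose_two_succ]
    omega

theorem eq_range_of_sum_eq_choose_two {s : Finset ℕ} (h : ∑ x ∈ s, x = (#s).choose 2) :
    s = range #s := by
  induction s using Finset.induction_on_max with
  | empty => simp
  | insert a s hlt ih =>
    have ha : a ∉ s := fun h => lt_irrefl a (hlt a h)
    have hcard : #s ≤ a := by simpa using card_le_card fun x hx => mem_range.2 (hlt x hx)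
    have hs := choose_two_card_le_sum s
    rw [card_insert_of_notMem ha, sum_insert ha, choose_two_succ] at h
    rw [card_insert_of_notMem ha, range_add_one, ← ih (by omega), show a = #s by omega]

namespace Lagrange

variable {F ι : Type*} [Field F] [DecidableEq ι] {s : Finset ι} {v : ι → F}

/-- Its value at the node `v i` is `v i * ∏ j ∈ s, (v i - (v j + 1))`, and since the leading
terms of the two summands cancel, its degree is `< #s`. -/
noncomputable def branchPoly (s : Finset ι) (v : ι → F) : F[X] :=
  X * nodal s (fun i => v i + 1) - (X - C (#s : F)) * nodal s v

theorem branchPoly_insert {i : ι} (hi : i ∉ s) :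
    branchPoly (insert i s) v =
      (X - C (v i + 1)) * branchPoly s v + C (#s - v i) * nodal s v := by
  simp only [branchPoly, nodal_insert_eq_nodal hi, card_insert_of_notMem hi, map_add, map_sub,
    map_natCast, Nat.cast_add, Nat.cast_one, map_one]
  ring

theorem degree_branchPoly_lt_and_coeff (s : Finset ι) (v : ι → F) :
    (branchPoly s v).degree < #s ∧
      (branchPoly s v).coeff (#s - 1) = ((#s).choose 2 : F) - ∑ i ∈ s, v i := by
  induction s using Finset.induction with
  | empty => simp [branchPoly]
  | insert i s hi ih =>
    obtain ⟨hdeg, hcoeff⟩ := ih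
    rw [branchPoly_insert hi, card_insert_of_notMem hi, Nat.add_sub_cancel]
    have hdeg₁ : ((X - C (v i + 1)) * branchPoly s v).degree < ↑(#s + 1) := by
      rw [degree_mul, degree_X_sub_C, Nat.cast_add, Nat.cast_one, add_comm]
      exact WithBot.add_lt_add_right (by simp) hdeg
    have hdeg₂ : (C ((#s : F) - v i) * nodal s v).degree < ↑(#s + 1) :=
      (degree_mul_le _ _).trans_lt <| (add_le_add degree_C_le le_rfl).trans_lt <| by
        rw [degree_nodal, zero_add]; exact_mod_cast Nat.lt_succ_self _
    refine ⟨(degree_add_le _ _).trans_lt (max_lt hdeg₁ hdeg₂), ?_⟩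
    have hnodal : (nodal s v).coeff #s = 1 := by
      simpa using (nodal_monic (s := s) (v := v)).coeff_natDegree
    have hX : (X * branchPoly s v).coeff #s = ((#s).choose 2 : F) - ∑ j ∈ s, v j := by
      rcases Nat.eq_zero_or_pos #s with h0 | hpos
      · simp [card_eq_zero.1 h0, branchPoly]
      · obtain ⟨m, hm⟩ := Nat.exists_eq_add_of_lt hpos
        rw [← hcoeff, hm, coeff_X_mul]
        simp
    rw [coeff_add, sub_mul, coeff_sub, coeff_C_mul, coeff_C_mul, hnodal, hX,
      coeff_eq_zero_of_degree_lt hdeg, sum_insert hi, choose_two_succ]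
    push_cast
    ring

theorem sum_mul_prod_sub_div_prod_sub (hvs : Set.InjOn v s) :
    ∑ i ∈ s, v i * (∏ j ∈ s, (v i - (v j + 1))) / ∏ j ∈ s.erase i, (v i - v j) =
      ((#s).choose 2 : F) - ∑ i ∈ s, v i := by
  obtain ⟨hdeg, hcoeff⟩ := degree_branchPoly_lt_and_coeff s v
  rw [← hcoeff, coeff_eq_sum hvs hdeg]
  refine sum_congr rfl fun i hi => ?_
  simp [branchPoly, eval_nodal, eval_nodal_at_node hi]

end Lagrange

def vandermonde (B : Finset ℕ) : ℕ :=
  ∏ x ∈ B, ∏ y ∈ B with y < x, (x - y)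

theorem vandermonde_insert {a : ℕ} {E : Finset ℕ} (ha : a ∉ E) :
    vandermonde (insert a E) = vandermonde E * ∏ y ∈ E, a.dist y := by
  have hdist : ∀ y ∈ E,
      (if y < a then a - y else 1) * (if a < y then y - a else 1) = a.dist y := by
    intro y hy
    have : y ≠ a := ne_of_mem_of_not_mem hy ha
    unfold Nat.dist
    split_ifs <;> omega
  simp only [vandermonde, prod_filter, prod_insert ha, lt_irrefl, if_false, one_mul,
    ← prod_congr rfl hdist, prod_mul_distrib]
  ring

theorem vandermonde_range (m : ℕ) : vandermonde (range m) = ∏ x ∈ range m, x ! := by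
  refine prod_congr rfl fun x hx => ?_
  have : {y ∈ range m | y < x} = range x := by
    ext y; simp only [mem_filter, mem_range] at hx ⊢; omega
  rw [this, ← Nat.descFactorial_eq_prod_range, Nat.descFactorial_self]

theorem vandermonde_pos (B : Finset ℕ) : 0 < vandermonde B :=
  prod_pos fun _ _ => prod_pos fun _ hy => Nat.sub_pos_of_lt (mem_filter.1 hy).2

theorem sub_mul_dist_succ (a y : ℕ) :
    ((a : ℚ) - y) * (a + 1).dist y = ((a : ℚ) + 1 - y) * a.dist y := by
  rcases le_or_gt y a with h | h
  · rw [Nat.dist_eq_sub_of_le_right (by omega), Nat.dist_eq_sub_of_le_right h,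
      Nat.cast_sub (by omega), Nat.cast_sub h]
    push_cast; ring
  · rw [Nat.dist_eq_sub_of_le h, Nat.dist_eq_sub_of_le h.le, Nat.cast_sub h, Nat.cast_sub h.le]
    push_cast; ring

theorem prod_sub_mul_vandermonde {B : Finset ℕ} {x : ℕ} (hx : x ∈ B) (hx₁ : 1 ≤ x)
    (hxB : x - 1 ∉ B) :
    (∏ y ∈ B, ((x : ℚ) - (y + 1))) * vandermonde B =
      -(∏ y ∈ B.erase x, ((x : ℚ) - y)) * vandermonde (insert (x - 1) (B.erase x)) := by
  obtain ⟨a, rfl⟩ : ∃ a, x = a + 1 := ⟨x - 1, by omega⟩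
  rw [Nat.add_sub_cancel] at hxB ⊢
  set E := B.erase (a + 1)
  have hxE : a + 1 ∉ E := notMem_erase _ _
  have haE : a ∉ E := fun h => hxB (mem_of_mem_erase h)
  have hfactor : ∏ y ∈ E, (((a + 1 : ℕ) : ℚ) - (y + 1)) * ((a + 1).dist y : ℕ) =
      ∏ y ∈ E, (((a + 1 : ℕ) : ℚ) - y) * (a.dist y : ℕ) := by
    refine prod_congr rfl fun y _ => ?_
    push_cast
    linear_combination sub_mul_dist_succ a y
  rw [← insert_erase hx, prod_insert hxE, vandermonde_insert hxE, vandermonde_insert haE]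
  simp only [prod_mul_distrib] at hfactor
  push_cast at hfactor ⊢
  linear_combination (-(vandermonde E : ℚ)) * hfactor

theorem sum_mul_vandermonde_insert_pred_erase (B : Finset ℕ) :
    ∑ x ∈ B with 1 ≤ x ∧ x - 1 ∉ B, x * vandermonde (insert (x - 1) (B.erase x)) +
      (#B).choose 2 * vandermonde B = (∑ x ∈ B, x) * vandermonde B := by
  have hterm : ∀ x ∈ B, (x : ℚ) * (∏ y ∈ B, ((x : ℚ) - (y + 1))) /
      (∏ y ∈ B.erase x, ((x : ℚ) - y)) * vandermonde B =
        if 1 ≤ x ∧ x - 1 ∉ B then -((x : ℚ) * vandermonde (insert (x - 1) (B.erase x)))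
        else 0 := by
    intro x hx
    split_ifs with h
    · have hne : ∏ y ∈ B.erase x, ((x : ℚ) - y) ≠ 0 :=
        prod_ne_zero_iff.2 fun y hy => sub_ne_zero.2 (by exact_mod_cast (ne_of_mem_erase hy).symm)
      rw [div_mul_eq_mul_div, mul_assoc, prod_sub_mul_vandermonde hx h.1 h.2]
      field_simp
    · rcases Nat.eq_zero_or_pos x with rfl | hpos
      · simp
      · have hmem : x - 1 ∈ B := by tauto
        rw [prod_eq_zero hmem (by push_cast [Nat.cast_sub hpos]; ring)]
        simp
  have key := congrArg (· * (vandermonde B : ℚ))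
    (Lagrange.sum_mul_prod_sub_div_prod_sub (s := B) Nat.cast_injective.injOn)
  simp only [sum_mul, sum_congr rfl hterm, ← sum_filter, sum_neg_distrib] at key
  apply Nat.cast_injective (R := ℚ)
  push_cast
  linear_combination -key

theorem MN_one_cons (μ : List ℕ) (B : Finset ℕ) :
    MN (1 :: μ) B = ∑ x ∈ B with 1 ≤ x ∧ x - 1 ∉ B, MN μ (insert (x - 1) (B.erase x)) := by
  refine sum_congr rfl fun x hx => ?_
  have : {y ∈ B | x - 1 < y ∧ y < x} = ∅ := filter_eq_empty_iff.2 fun y _ => by omega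
  simp [this]

theorem MN_replicate_one_mul_prod_factorial (n : ℕ) {B : Finset ℕ}
    (hB : ∑ x ∈ B, x = n + (#B).choose 2) :
    MN (List.replicate n 1) B * ∏ x ∈ B, (x ! : ℤ) = n ! * vandermonde B := by
  induction n generalizing B with
  | zero =>
    have hrange : B = range #B := eq_range_of_sum_eq_choose_two (by simpa using hB)
    rw [hrange]
    simp [MN, vandermonde_range]
  | succ n ih =>
    have hstep : ∀ x ∈ {x ∈ B | 1 ≤ x ∧ x - 1 ∉ B},
        MN (List.replicate n 1) (insert (x - 1) (B.erase x)) * ∏ y ∈ B, (y ! : ℤ) =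
          n ! * (x * vandermonde (insert (x - 1) (B.erase x)) : ℕ) := by
      intro x hx
      obtain ⟨hxB, hx₁, hx₁B⟩ := mem_filter.1 hx
      have hnot : x - 1 ∉ B.erase x := fun h => hx₁B (mem_of_mem_erase h)
      have hcard : #(insert (x - 1) (B.erase x)) = #B := by
        rw [card_insert_of_notMem hnot, card_erase_add_one hxB]
      have hsum : ∑ y ∈ insert (x - 1) (B.erase x), y = n + (#B).choose 2 := by
        have := sum_erase_add B (fun y => y) hxB
        rw [sum_insert hnot]
        omega
      have hfact : ∏ y ∈ B, (y ! : ℤ) = x * ∏ y ∈ insert (x - 1) (B.erase x), (y ! : ℤ) := by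
        rw [prod_insert hnot, ← mul_prod_erase B _ hxB, ← mul_assoc, ← Nat.cast_mul,
          ← Nat.mul_factorial_pred (by omega)]
      rw [hfact, mul_left_comm, ih (by rwa [hcard])]
      push_cast
      ring
    have hbranch : ∑ x ∈ B with 1 ≤ x ∧ x - 1 ∉ B,
        x * vandermonde (insert (x - 1) (B.erase x)) = (n + 1) * vandermonde B := by
      have := sum_mul_vandermonde_insert_pred_erase B
      rw [hB, add_mul] at this
      omega
    rw [List.replicate_succ, MN_one_cons, sum_mul, sum_congr rfl hstep, ← mul_sum,
      ← Nat.cast_sum, hbranch, Nat.factorial_succ]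
    push_cast
    ring

def countDvdPairs (q : ℕ) (B : Finset ℕ) : ℕ :=
  ∑ x ∈ B, #{y ∈ B | y < x ∧ q ∣ x - y}

theorem card_lt_card_of_dvd_sub {q : ℕ} {B : Finset ℕ} {x x' : ℕ} (hx : x ∈ B) (hlt : x < x')
    (hdvd : q ∣ x' - x) :
    #{y ∈ B | y < x ∧ q ∣ x - y} < #{y ∈ B | y < x' ∧ q ∣ x' - y} := by
  refine card_lt_card (ssubset_iff.2 ⟨x, by simp, fun y hy => ?_⟩)
  rcases mem_insert.1 hy with rfl | hy
  · exact mem_filter.2 ⟨hx, hlt, hdvd⟩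
  · obtain ⟨hyB, hyx, hdy⟩ := mem_filter.1 hy
    refine mem_filter.2 ⟨hyB, hyx.trans hlt, ?_⟩
    rw [← Nat.sub_add_sub_cancel hlt.le hyx.le]
    exact dvd_add hdvd hdy

theorem countDvdPairs_pos {q x y : ℕ} {B : Finset ℕ} (hx : x ∈ B) (hy : y ∈ B) (hyx : y < x)
    (hdvd : q ∣ x - y) : 0 < countDvdPairs q B :=
  sum_pos' (fun _ _ => Nat.zero_le _)
    ⟨x, hx, card_pos.2 ⟨y, mem_filter.2 ⟨hy, hyx, hdvd⟩⟩⟩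

/-- Abacus argument: `x ↦ q * #{y ∈ B | y < x, y ≡ x [MOD q]} + x % q` is injective on `B`,
so its values sum to at least `(#B).choose 2`. -/
theorem sum_div_le_add_countDvdPairs {q n : ℕ} {B : Finset ℕ} (hq : 0 < q)
    (hB : ∑ x ∈ B, x = n + (#B).choose 2) :
    ∑ x ∈ B, x / q ≤ n / q + countDvdPairs q B := by
  set cnt : ℕ → ℕ := fun x => #{y ∈ B | y < x ∧ q ∣ x - y}
  have hinj : Set.InjOn (fun x => q * cnt x + x % q) B := by
    intro x hx x' hx' h
    have hmod : x % q = x' % q := by simpa [Nat.mul_add_mod] using congrArg (· % q) h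
    have hcnt : cnt x = cnt x' := by
      simp only [hmod, add_left_inj] at h
      exact Nat.eq_of_mul_eq_mul_left hq h
    by_contra hne
    rcases lt_or_gt_of_ne hne with hlt | hlt
    · exact (card_lt_card_of_dvd_sub hx hlt ((Nat.modEq_iff_dvd' hlt.le).1 hmod)).ne hcnt
    · exact (card_lt_card_of_dvd_sub hx' hlt ((Nat.modEq_iff_dvd' hlt.le).1 hmod.symm)).ne
        hcnt.symm
  have himage := choose_two_card_le_sum (B.image fun x => q * cnt x + x % q)
  rw [sum_image hinj, card_image_of_injOn hinj, sum_add_distrib, ← mul_sum] at himage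
  have hdecomp : ∑ x ∈ B, x = q * ∑ x ∈ B, x / q + ∑ x ∈ B, x % q := by
    rw [mul_sum, ← sum_add_distrib]
    exact sum_congr rfl fun x _ => (Nat.div_add_mod x q).symm
  have hn := Nat.lt_mul_div_succ n hq
  by_contra! h
  change n / q + ∑ x ∈ B, cnt x < ∑ x ∈ B, x / q at h
  have := Nat.mul_le_mul_left q h
  linarith

theorem factorization_vandermonde {p K : ℕ} (hp : p.Prime) {B : Finset ℕ}
    (hB : ∀ x ∈ B, x < p ^ K) :
    (vandermonde B).factorization p = ∑ k ∈ Ico 1 K, countDvdPairs (p ^ k) B := by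
  have hsub : ∀ x ∈ B, ∀ y ∈ {y ∈ B | y < x}, 0 < x - y :=
    fun x _ y hy => Nat.sub_pos_of_lt (mem_filter.1 hy).2
  rw [vandermonde, Nat.factorization_prod fun x hx => (prod_pos (hsub x hx)).ne',
    Finsupp.finsetSum_apply]
  simp only [countDvdPairs]
  rw [sum_comm]
  refine sum_congr rfl fun x hx => ?_
  rw [Nat.factorization_prod fun y hy => (hsub x hx y hy).ne', Finsupp.finsetSum_apply,
    sum_congr rfl fun y hy => Nat.factorization_eq_card_pow_dvd_of_lt hp (hsub x hx y hy)
      ((Nat.sub_le x y).trans_lt (hB x hx))]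
  simp only [card_filter, ← filter_filter]
  exact sum_comm

theorem factorization_prod_factorial {p K : ℕ} (hp : p.Prime) {B : Finset ℕ}
    (hB : ∀ x ∈ B, Nat.log p x < K) :
    (∏ x ∈ B, x !).factorization p = ∑ k ∈ Ico 1 K, ∑ x ∈ B, x / p ^ k := by
  rw [Nat.factorization_prod fun x _ => Nat.factorial_ne_zero x, Finsupp.finsetSum_apply,
    sum_comm]
  exact sum_congr rfl fun x hx => Nat.factorization_factorial hp (hB x hx)

theorem prime_dvd_of_mul_prod_factorial_eq {p t n F : ℕ} {B : Finset ℕ} (hp : p.Prime)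
    (ht : 0 < t) (hF : F * ∏ x ∈ B, x ! = n ! * vandermonde B)
    (hB : ∑ x ∈ B, x = n + (#B).choose 2)
    (hlt : ∑ x ∈ B, x / p ^ t < n / p ^ t + countDvdPairs (p ^ t) B) : p ∣ F := by
  rcases eq_or_ne F 0 with rfl | hF0
  · exact dvd_zero p
  set K := n + ∑ x ∈ B, x + t + 1
  have hK : ∀ m < K, m < p ^ K := fun m hm => hm.trans (Nat.lt_pow_self hp.one_lt)
  have hxK : ∀ x ∈ B, x < K := fun x hx => by
    have := single_le_sum (f := fun x => x) (fun _ _ => Nat.zero_le _) hx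
    omega
  have hlog : ∀ m < K, Nat.log p m < K := fun m hm => Nat.log_lt_of_lt_pow' (by omega) (hK m hm)
  have hval := congrArg (fun m => m.factorization p) hF
  simp only [Nat.factorization_mul hF0 (prod_ne_zero_iff.2 fun x _ => Nat.factorial_ne_zero x),
    Nat.factorization_mul (Nat.factorial_ne_zero n) (vandermonde_pos B).ne', Finsupp.add_apply,
    factorization_prod_factorial hp fun x hx => hlog x (hxK x hx),
    factorization_vandermonde hp fun x hx => hK x (hxK x hx),
    Nat.factorization_factorial hp (hlog n (by omega))] at hval
  have hsum : ∑ k ∈ Ico 1 K, ∑ x ∈ B, x / p ^ k <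
      ∑ k ∈ Ico 1 K, (n / p ^ k + countDvdPairs (p ^ k) B) :=
    sum_lt_sum (fun k _ => sum_div_le_add_countDvdPairs (pow_pos hp.pos k) hB)
      ⟨t, mem_Ico.2 ⟨ht, by omega⟩, hlt⟩
  rw [sum_add_distrib] at hsum
  exact (hp.dvd_iff_one_le_factorization hF0).2 (by omega)

theorem sum_range_getD {M : Type*} [AddCommMonoid M] (l : List M) :
    ∑ i ∈ range l.length, l.getD i 0 = l.sum := by
  induction l with
  | nil => simp
  | cons a l ih =>
    rw [List.length_cons, sum_range_succ', List.sum_cons, add_comm]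
    simpa only [List.getD_cons_succ, List.getD_cons_zero] using congrArg (a + ·) ih

section Partition

variable {α : List ℕ}

theorem IsPartition.getD_le_getD (hα : IsPartition α) {i j : ℕ} (hij : i ≤ j) :
    α.getD j 0 ≤ α.getD i 0 := by
  rcases lt_or_ge j α.length with hj | hj
  · rw [List.getD_eq_getElem _ _ hj, List.getD_eq_getElem _ _ (hij.trans_lt hj)]
    rcases hij.eq_or_lt with rfl | hlt
    · exact le_rfl
    · exact List.pairwise_iff_getElem.1 hα.1 i j _ hj hlt
  · rw [List.getD_eq_default _ _ hj]
    exact Nat.zero_le _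

theorem IsPartition.getD_pos (hα : IsPartition α) {i : ℕ} (hi : i < α.length) :
    0 < α.getD i 0 := by
  rw [List.getD_eq_getElem _ _ hi]
  exact hα.2 _ (List.getElem_mem hi)

theorem le_getD_of_lt_length_filter (hα : α.Pairwise (· ≥ ·)) {v i : ℕ}
    (hi : i < (α.filter (v ≤ ·)).length) : v ≤ α.getD i 0 := by
  induction α generalizing i with
  | nil => simp at hi
  | cons a α ih =>
    obtain ⟨ha, hα⟩ := List.pairwise_cons.1 hα
    by_cases hv : v ≤ a
    · rw [List.filter_cons_of_pos (by simpa using hv)] at hi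
      cases i with
      | zero => simpa using hv
      | succ i => simpa using ih hα (by simpa using hi)
    · have hnil : α.filter (v ≤ ·) = [] :=
        List.filter_eq_nil_iff.2 fun b hb => by simpa using (ha b hb).trans_lt (not_le.1 hv)
      rw [List.filter_cons_of_neg (by simpa using hv), hnil] at hi
      simp at hi

theorem IsPartition.hookLen_two_one (hα : IsPartition α) :
    hookLen α 2 1 = α.getD 1 0 + α.length - 2 := by
  have : α.filter (1 ≤ ·) = α := List.filter_eq_self.2 fun a ha => decide_eq_true (hα.2 a ha)
  simp only [hookLen, this]
  ring

theorem IsPartition.hookLen_one_getD_one_add_one (hα : IsPartition α)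
    (h : α.getD 1 0 < α.getD 0 0) :
    hookLen α 1 (α.getD 1 0 + 1) = α.getD 0 0 - α.getD 1 0 := by
  have hlen : (α.filter (α.getD 1 0 + 1 ≤ ·)).length = 1 := by
    have hle : (α.filter (α.getD 1 0 + 1 ≤ ·)).length ≤ 1 := by
      by_contra! h2
      have := le_getD_of_lt_length_filter hα.1 h2
      omega
    have hpos : 0 < (α.filter (α.getD 1 0 + 1 ≤ ·)).length := by
      have h0 : 0 < α.length := List.length_pos_iff.2 (by rintro rfl; simp at h)
      refine List.length_pos_iff_exists_mem.2
        ⟨α.getD 0 0, List.mem_filter.2 ⟨?_, by simpa using h⟩⟩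
      rw [List.getD_eq_getElem _ _ h0]
      exact List.getElem_mem h0
    omega
  simp only [hookLen, hlen]
  push_cast
  ring

theorem IsPartition.betaSet_injOn (hα : IsPartition α) :
    Set.InjOn (fun i => α.getD i 0 + (α.length - 1 - i)) (range α.length) := by
  intro i hi j hj hij
  simp only [coe_range, Set.mem_Iio] at hi hj
  rcases lt_trichotomy i j with h | h | h
  · have := hα.getD_le_getD h.le; simp only at hij; omega
  · exact h
  · have := hα.getD_le_getD h.le; simp only at hij; omega

theorem IsPartition.card_betaSet (hα : IsPartition α) : #(betaSet α) = α.length := by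
  rw [betaSet, betaSetN, card_image_of_injOn hα.betaSet_injOn, card_range]

theorem IsPartition.sum_betaSet (hα : IsPartition α) :
    ∑ x ∈ betaSet α, x = α.sum + (#(betaSet α)).choose 2 := by
  have hreflect : ∑ i ∈ range α.length, (α.length - 1 - i) = α.length.choose 2 := by
    rw [sum_range_reflect (fun i => i), sum_range_id, Nat.choose_two_right]
  rw [hα.card_betaSet, betaSet, betaSetN, sum_image hα.betaSet_injOn, sum_add_distrib,
    sum_range_getD, hreflect]

theorem getD_add_mem_betaSet {i : ℕ} (hi : i < α.length) :
    α.getD i 0 + (α.length - 1 - i) ∈ betaSet α :=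
  mem_image_of_mem _ (mem_range.2 hi)

theorem IsPartition.lt_of_mem_betaSet (hα : IsPartition α) {x : ℕ} (hx : x ∈ betaSet α)
    (hne : x ≠ α.getD 0 0 + (α.length - 1)) : x < α.getD 1 0 + (α.length - 1) := by
  obtain ⟨i, hi, rfl⟩ := mem_image.1 hx
  have hi0 : i ≠ 0 := by rintro rfl; exact hne rfl
  have := hα.getD_le_getD (Nat.one_le_iff_ne_zero.2 hi0)
  have := mem_range.1 hi
  omega

theorem IsPartition.sum_div_betaSet (hα : IsPartition α) {q : ℕ}
    (hq : α.getD 1 0 + (α.length - 1) ≤ q) :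
    ∑ x ∈ betaSet α, x / q = (α.getD 0 0 + (α.length - 1)) / q := by
  rcases α.length.eq_zero_or_pos with h0 | h0
  · simp [List.length_eq_zero_iff.1 h0, betaSet, betaSetN]
  · refine sum_eq_single_of_mem _ (by simpa using getD_add_mem_betaSet h0) fun x hx hne => ?_
    exact Nat.div_eq_of_lt ((hα.lt_of_mem_betaSet hx hne).trans_le hq)

theorem IsPartition.prime_dvd_charDegree {p t : ℕ} (hα : IsPartition α) (hp : p.Prime)
    (ht : 0 < t)
    (hlt : ∑ x ∈ betaSet α, x / p ^ t < α.sum / p ^ t + countDvdPairs (p ^ t) (betaSet α)) :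
    (p : ℤ) ∣ charDegree α := by
  have hhook := MN_replicate_one_mul_prod_factorial α.sum hα.sum_betaSet
  rw [← Nat.cast_prod] at hhook
  replace hhook := congrArg Int.natAbs hhook
  simp only [Int.natAbs_mul, Int.natAbs_natCast] at hhook
  exact Int.natCast_dvd.2
    (prime_dvd_of_mul_prod_factorial_eq (F := (charDegree α).natAbs) hp ht hhook
      hα.sum_betaSet hlt)

theorem IsPartition.prime_dvd_charDegree_of_parts {p t d : ℕ} (hα : IsPartition α)
    (hp : p.Prime)
    (hc : d * p ^ t + α.getD 1 0 < α.getD 0 0 + (α.filter (α.getD 1 0 ≤ ·)).length)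
    (h₀ : α.getD 0 0 < d * p ^ t + α.getD 1 0) (hL : α.getD 1 0 + α.length < p ^ t + 2)
    (hn : α.sum / p ^ t = d) :
    (p : ℤ) ∣ charDegree α := by
  have hcL : (α.filter (α.getD 1 0 ≤ ·)).length ≤ α.length := List.length_filter_le _ _
  obtain ⟨i, hi⟩ : ∃ i, i + α.getD 0 0 = α.getD 1 0 + d * p ^ t :=
    ⟨_, Nat.sub_add_cancel (by omega)⟩
  have hαi : α.getD i 0 = α.getD 1 0 :=
    le_antisymm (hα.getD_le_getD (by omega)) (le_getD_of_lt_length_filter hα.1 (by omega))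
  have ha₂ := hα.getD_pos (i := 1) (by omega)
  have ha₂a₁ := hα.getD_le_getD (Nat.zero_le 1)
  have ht : 0 < t := Nat.pos_of_ne_zero fun h => by rw [h, pow_zero] at hL; omega
  have hx := getD_add_mem_betaSet (α := α) (i := i) (by omega)
  have hb := getD_add_mem_betaSet (α := α) (i := 0) (by omega)
  refine hα.prime_dvd_charDegree hp ht ?_
  rw [hα.sum_div_betaSet (by omega), hn,
    Nat.div_eq_of_lt_le (k := d) (by omega) (by rw [Nat.succ_mul]; omega)]
  exact Nat.lt_add_of_pos_right
    (countDvdPairs_pos hb hx (by omega) (Dvd.intro_left d (by omega)))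

end Partition

theorem dvd_degree_of_hooks_general (p t d e : ℕ) (α : List ℕ) (hp : p.Prime)
    (he : e < p ^ t)
    (hα : IsPartitionOf (d * p ^ t + e) α)
    (h1 : α.getD 1 0 < α.getD 0 0)
    (hh1 : (d : ℤ) * p ^ t < hookLen α 1 (α.getD 1 0))
    (hh3 : hookLen α 1 (α.getD 1 0 + 1) < (d : ℤ) * p ^ t)
    (hh4 : hookLen α 2 1 < (p : ℤ) ^ t) :
    (p : ℤ) ∣ charDegree α := by
  obtain ⟨hpart, hsum⟩ := hα
  rw [hpart.hookLen_one_getD_one_add_one h1] at hh3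
  rw [hpart.hookLen_two_one] at hh4
  simp only [hookLen, Nat.sub_self, Nat.cast_one] at hh1
  refine hpart.prime_dvd_charDegree_of_parts (t := t) (d := d) hp
    ((Nat.cast_lt (α := ℤ)).1 ?_) ((Nat.cast_lt (α := ℤ)).1 ?_) ((Nat.cast_lt (α := ℤ)).1 ?_) ?_
  · push_cast; linarith
  · push_cast; linarith
  · push_cast; linarith
  · rw [hsum, Nat.div_eq_of_lt_le (k := d) (by omega) (by rw [Nat.succ_mul]; omega)]

/-- hook-length conditions forcing `p ∣ deg χ^α`. -/
theorem dvd_degree_of_hooks (p t d e : ℕ) (α : List ℕ) (hp : p.Prime)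
    (hd : 1 ≤ d) (he : e < p ^ t)
    (hα : IsPartitionOf (d * p ^ t + e) α)
    (h2 : 1 ≤ α.getD 1 0) (h1 : α.getD 1 0 < α.getD 0 0)
    (hh1 : (d : ℤ) * p ^ t < hookLen α 1 (α.getD 1 0))
    (hh2 : ((d : ℤ) - 1) * p ^ t < hookLen α 1 (α.getD 1 0 + 1))
    (hh3 : hookLen α 1 (α.getD 1 0 + 1) < (d : ℤ) * p ^ t)
    (hh4 : hookLen α 2 1 < (p : ℤ) ^ t) :
    (p : ℤ) ∣ charDegree α :=
  dvd_degree_of_hooks_general p t d e α hp he hα h1 hh1 hh3 hh4
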